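/- arXiv:1302.4804 — 4 statements merged into one kernel-verified Lean document; each statement's English description precedes it below -/
import Mathlib

section
/- A net of quadrics Λ in the variables a,b,c,d,e is ρ1-unstable, where ρ1=(1,1,1,1,-4), if and only if at least one of the following holds: (a) the subspace of Λ consisting of forms divisible by e has dimension at least 2 (a pencil of Λ contains the hyperplane e=0); or (b) e² ∈ Λ (an element of the net is singular along the hyperplane e=0). -/
open MvPolynomial

/-- The space of polynomials in the five variables `a,b,c,d,e` (indexed `0,…,4`). -/
abbrev Quin : Type := MvPolynomial (Fin 5) ℂ

/-- `m` is (the exponent vector of) a quadratic monomial. -/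
def QuadMon (m : Fin 5 →₀ ℕ) : Prop := (m.sum fun _ n => n) = 2

/-- A net of quadrics: a 3-dimensional space of quadratic forms. -/
def IsNet (Λ : Submodule ℂ Quin) : Prop :=
  Module.finrank ℂ Λ = 3 ∧ ∀ Q ∈ Λ, MvPolynomial.IsHomogeneous Q 2

/-- The `ρ`-weight of a monomial. -/
def wt (ρ : Fin 5 → ℤ) (m : Fin 5 →₀ ℕ) : ℤ := ∑ i, (m i : ℤ) * ρ i

/-- `Λ` is semistable with respect to the weight vector `ρ`: there are three distinct
quadratic monomials with total `ρ`-weight `≥ 0` such that the corresponding coefficient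
map `Λ → ℂ³` is bijective. -/
def SemistableWrt (Λ : Submodule ℂ Quin) (ρ : Fin 5 → ℤ) : Prop :=
  ∃ m1 m2 m3 : Fin 5 →₀ ℕ, m1 ≠ m2 ∧ m1 ≠ m3 ∧ m2 ≠ m3 ∧
    QuadMon m1 ∧ QuadMon m2 ∧ QuadMon m3 ∧
    0 ≤ wt ρ m1 + wt ρ m2 + wt ρ m3 ∧
    Function.Bijective (fun Q : Λ =>
      (![MvPolynomial.coeff m1 (Q : Quin), MvPolynomial.coeff m2 (Q : Quin),
         MvPolynomial.coeff m3 (Q : Quin)] : Fin 3 → ℂ))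

/-- The twelve distinguished weight vectors `ρ1,…,ρ12`. -/
def rho : Fin 12 → Fin 5 → ℤ :=
  ![![1,1,1,1,-4], ![2,2,2,-3,-3], ![3,3,-2,-2,-2], ![4,-1,-1,-1,-1],
    ![3,3,3,-2,-7], ![4,4,-1,-1,-6], ![9,4,-1,-6,-6], ![7,2,2,-3,-8],
    ![12,7,2,-8,-13], ![9,4,-1,-1,-11], ![14,4,-1,-6,-11], ![13,8,3,-7,-17]]

/-- A normalized weight vector: nonincreasing, sums to zero and not identically zero. -/
def IsNormalized (ρ : Fin 5 → ℤ) : Prop :=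
  (∀ i j : Fin 5, i ≤ j → ρ j ≤ ρ i) ∧ (∑ i, ρ i) = 0 ∧ ρ ≠ 0

/-- Linear substitution of variables by the matrix `g`, as a linear map on polynomials. -/
noncomputable def substMap (g : Matrix (Fin 5) (Fin 5) ℂ) : Quin →ₗ[ℂ] Quin :=
  (MvPolynomial.aeval fun i => ∑ j, MvPolynomial.C (g i j) * MvPolynomial.X j).toLinearMap

/-- Semistability of a net (Hilbert–Mumford criterion for `SL(5)`). -/
def Semistable (Λ : Submodule ℂ Quin) : Prop :=
  ∀ (g : Matrix.GeneralLinearGroup (Fin 5) ℂ) (ρ : Fin 5 → ℤ), IsNormalized ρ →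
    SemistableWrt (Submodule.map (substMap (g : Matrix (Fin 5) (Fin 5) ℂ)) Λ) ρ

/-- The symmetric matrix of a quadratic form. -/
noncomputable def quadMatrix (Q : Quin) : Matrix (Fin 5) (Fin 5) ℂ :=
  Matrix.of fun i j =>
    if i = j then MvPolynomial.coeff (Finsupp.single i 2) Q
    else (1/2) * MvPolynomial.coeff (Finsupp.single i 1 + Finsupp.single j 1) Q

/-- The discriminant quintic `det (x·A1 + y·A2 + z·A3)` of a net with basis `Q1,Q2,Q3`. -/
noncomputable def netDisc (Q1 Q2 Q3 : Quin) : MvPolynomial (Fin 3) ℂ :=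
  Matrix.det (Matrix.of fun i j : Fin 5 =>
    MvPolynomial.C (quadMatrix Q1 i j) * MvPolynomial.X 0 +
    MvPolynomial.C (quadMatrix Q2 i j) * MvPolynomial.X 1 +
    MvPolynomial.C (quadMatrix Q3 i j) * MvPolynomial.X 2)

/-- The net lies on a smooth quartic del Pezzo surface. -/
def OnSmoothDelPezzo (Λ : Submodule ℂ Quin) : Prop :=
  ∃ P1 P2 : Quin, P1 ∈ Λ ∧ P2 ∈ Λ ∧ LinearIndependent ℂ ![P1, P2] ∧
    ∀ v : Fin 5 → ℂ, v ≠ 0 → MvPolynomial.eval v P1 = 0 → MvPolynomial.eval v P2 = 0 →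
      LinearIndependent ℂ
        ![fun i => MvPolynomial.eval v (MvPolynomial.pderiv i P1),
          fun i => MvPolynomial.eval v (MvPolynomial.pderiv i P2)]

/-- The span of the quadratic monomials whose exponent vectors satisfy `P`. -/
noncomputable def monSpan (P : (Fin 5 →₀ ℕ) → Prop) : Submodule ℂ Quin :=
  Submodule.span ℂ {Q : Quin | ∃ m : Fin 5 →₀ ℕ, QuadMon m ∧ P m ∧ Q = MvPolynomial.monomial m 1}


/-! For a quadratic monomial the `ρ1`-weight is `2 - 5·(degree in e)`, so three distinct monomials
have nonnegative total weight exactly when at most one of them involves `e`, and only linearly.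
If the part `K` of `Λ` divisible by `e` has dimension `≥ 2`, some nonzero element of `K` is killed
by the two `e`-free coefficients and the third one; if `e² ∈ Λ`, it is killed by all three.
Conversely, if `dim K ≤ 1` and `e² ∉ Λ`, the coefficient at some monomial `μ` of `e`-degree one is
injective on `K`. The `e`-free coefficients together with that of `μ` then have no common zero on
`Λ`, and a basis of the dual of `Λ` chosen among them uses `μ` at most once. -/

open Module

theorem Submodule.exists_mem_ne_zero_apply_eq_zero {K V : Type*} [Field K] [AddCommGroup V]
    [Module K V] {W : Submodule K V} (hW : 1 < finrank K W) (φ : V →ₗ[K] K) :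
    ∃ v ∈ W, v ≠ 0 ∧ φ v = 0 := by
  have : FiniteDimensional K W := Module.finite_of_finrank_pos (by omega)
  have hker : LinearMap.ker (φ.domRestrict W) ≠ ⊥ :=
    LinearMap.ker_ne_bot_of_finrank_lt (by rwa [finrank_self])
  obtain ⟨v, hv, hv0⟩ := (Submodule.ne_bot_iff _).mp hker
  exact ⟨v, v.2, fun h => hv0 (Subtype.ext h), hv⟩

/-- Functionals with no common zero span the dual, so a basis of the dual can be chosen among
them. -/
theorem exists_injective_forall_apply_eq_zero_imp {K V ι : Type*} [Field K] [AddCommGroup V]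
    [Module K V] [FiniteDimensional K V] {n : ℕ} (hn : finrank K V = n) (f : ι → Dual K V)
    (hf : ∀ v, (∀ i, f i v = 0) → v = 0) :
    ∃ g : Fin n → ι, Function.Injective g ∧ ∀ v, (∀ k, f (g k) v = 0) → v = 0 := by
  have hspan : Submodule.span K (Set.range f) = ⊤ :=
    Submodule.span_eq_top_of_ne_zero fun v hv => by
      by_contra! h
      exact hv (hf v fun i => h _ ⟨i, rfl⟩)
  obtain ⟨κ, a, ha, hsp, hli⟩ := exists_linearIndependent' K f
  let b : Basis κ K (Dual K V) := Basis.mk hli (by rw [hsp, hspan])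
  have : Finite κ := Module.Finite.finite_basis b
  have hcard : Nat.card κ = n := by
    rw [← finrank_eq_nat_card_basis b, Subspace.dual_finrank_eq, hn]
  let e := (Finite.equivFinOfCardEq hcard).symm
  refine ⟨a ∘ e, ha.comp e.injective, fun v hv => ?_⟩
  have hb : Dual.eval K V v = 0 := b.ext fun k => by
    simpa [b, e] using hv (e.symm k)
  exact (forall_dual_apply_eq_zero_iff K v).mp fun φ => LinearMap.congr_fun hb φ

theorem coeff_X_pow_eq_zero_of_lt {σ R : Type*} [CommSemiring R] {i : σ} {n : ℕ}
    {m : σ →₀ ℕ} (h : m i < n) : coeff m (X i ^ n : MvPolynomial σ R) = 0 := by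
  classical
  rw [coeff_X_pow, if_neg]
  rintro rfl
  simp at h

theorem quadMon_iff (m : Fin 5 →₀ ℕ) : QuadMon m ↔ m 0 + m 1 + m 2 + m 3 + m 4 = 2 := by
  rw [QuadMon, Finsupp.sum_fintype _ _ fun _ => rfl, Fin.sum_univ_five]

theorem QuadMon.of_coeff_ne_zero {Q : Quin} (hQ : Q.IsHomogeneous 2) {m : Fin 5 →₀ ℕ}
    (hm : coeff m Q ≠ 0) : QuadMon m := by
  have h : m.degree = 2 := by_contra fun hd => hm (hQ.coeff_eq_zero hd)
  simpa [QuadMon, Finsupp.sum, Finsupp.degree_apply] using h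

theorem QuadMon.eq_single_of_apply_eq_two {m : Fin 5 →₀ ℕ} (hm : QuadMon m) {i : Fin 5}
    (hi : m i = 2) : m = Finsupp.single i 2 := by
  rw [quadMon_iff] at hm
  ext j
  fin_cases i <;> fin_cases j <;> simp_all <;> omega

theorem wt_rho_zero {m : Fin 5 →₀ ℕ} (hm : QuadMon m) : wt (rho 0) m = 2 - 5 * (m 4 : ℤ) := by
  rw [quadMon_iff] at hm
  simp only [wt, rho, Fin.sum_univ_five, Matrix.cons_val_zero, Matrix.cons_val_one,
    Matrix.cons_val_two, Matrix.cons_val_three, Matrix.cons_val_four, Matrix.head_cons,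
    Matrix.tail_cons]
  omega

theorem monSpan_eq_restrictSupport (P : (Fin 5 →₀ ℕ) → Prop) :
    monSpan P = restrictSupport ℂ {m | QuadMon m ∧ P m} := by
  rw [restrictSupport_eq_span, monSpan]
  congr 1
  ext Q
  simp [eq_comm, and_assoc]

theorem mem_monSpan_iff {P : (Fin 5 →₀ ℕ) → Prop} {Q : Quin} :
    Q ∈ monSpan P ↔ ∀ m ∈ Q.support, QuadMon m ∧ P m := by
  rw [monSpan_eq_restrictSupport, mem_restrictSupport_iff]
  rfl

theorem coeff_eq_zero_of_mem_monSpan {P : (Fin 5 →₀ ℕ) → Prop} {Q : Quin} (hQ : Q ∈ monSpan P)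
    {m : Fin 5 →₀ ℕ} (hm : ¬ P m) : coeff m Q = 0 :=
  by_contra fun h => hm (mem_monSpan_iff.mp hQ m (mem_support_iff.mpr h)).2

theorem mem_monSpan_of_coeff_eq_zero {P : (Fin 5 →₀ ℕ) → Prop} {Q : Quin}
    (hQ : Q.IsHomogeneous 2) (h : ∀ m, QuadMon m → ¬ P m → coeff m Q = 0) : Q ∈ monSpan P := by
  refine mem_monSpan_iff.mpr fun m hm => ?_
  have hm' := mem_support_iff.mp hm
  have hq := QuadMon.of_coeff_ne_zero hQ hm'
  exact ⟨hq, by_contra fun hP => hm' (h m hq hP)⟩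

theorem coeff_triple_bijective_iff {Λ : Submodule ℂ Quin} (hΛ : finrank ℂ Λ = 3)
    (m1 m2 m3 : Fin 5 →₀ ℕ) :
    Function.Bijective (fun Q : Λ =>
        (![coeff m1 (Q : Quin), coeff m2 (Q : Quin), coeff m3 (Q : Quin)] : Fin 3 → ℂ)) ↔
      ∀ Q ∈ Λ, coeff m1 Q = 0 → coeff m2 Q = 0 → coeff m3 Q = 0 → Q = 0 := by
  let L : Λ →ₗ[ℂ] Fin 3 → ℂ :=
    LinearMap.pi fun i => (lcoeff ℂ (![m1, m2, m3] i)).comp Λ.subtype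
  have hL : (fun Q : Λ =>
      (![coeff m1 (Q : Quin), coeff m2 (Q : Quin), coeff m3 (Q : Quin)] : Fin 3 → ℂ)) = L := by
    funext Q i
    fin_cases i <;> rfl
  have : FiniteDimensional ℂ Λ := Module.finite_of_finrank_pos (by omega)
  have hfin : finrank ℂ Λ = finrank ℂ (Fin 3 → ℂ) := by simp [hΛ]
  rw [hL, Function.Bijective, ← LinearMap.injective_iff_surjective_of_finrank_eq_finrank hfin,
    and_self, injective_iff_map_eq_zero]
  constructor
  · intro h Q hQ h1 h2 h3
    refine congrArg Subtype.val (h ⟨Q, hQ⟩ ?_)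
    funext i
    fin_cases i <;> assumption
  · intro h Q hQ
    exact Subtype.ext (h Q Q.2 (congrFun hQ 0) (congrFun hQ 1) (congrFun hQ 2))

theorem semistableWrt_rho_zero_iff {Λ : Submodule ℂ Quin} (hΛ : finrank ℂ Λ = 3) :
    SemistableWrt Λ (rho 0) ↔
      ∃ m1 m2 m3 : Fin 5 →₀ ℕ, m1 ≠ m2 ∧ m1 ≠ m3 ∧ m2 ≠ m3 ∧
        QuadMon m1 ∧ QuadMon m2 ∧ QuadMon m3 ∧ m1 4 + m2 4 + m3 4 ≤ 1 ∧
        ∀ Q ∈ Λ, coeff m1 Q = 0 → coeff m2 Q = 0 → coeff m3 Q = 0 → Q = 0 := by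
  simp only [SemistableWrt, coeff_triple_bijective_iff hΛ]
  refine exists₃_congr fun m1 m2 m3 => ?_
  constructor <;> rintro ⟨h12, h13, h23, q1, q2, q3, hw, hsep⟩ <;>
    refine ⟨h12, h13, h23, q1, q2, q3, ?_, hsep⟩ <;>
    rw [wt_rho_zero q1, wt_rho_zero q2, wt_rho_zero q3] at * <;> omega

theorem finrank_inf_monSpan_le_one {Λ : Submodule ℂ Quin} {m1 m2 m3 : Fin 5 →₀ ℕ}
    (hsum : m1 4 + m2 4 + m3 4 ≤ 1)
    (hsep : ∀ Q ∈ Λ, coeff m1 Q = 0 → coeff m2 Q = 0 → coeff m3 Q = 0 → Q = 0) :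
    finrank ℂ ↥(Λ ⊓ monSpan fun m => m 4 ≠ 0) ≤ 1 := by
  by_contra! h
  have hker (μ : Fin 5 →₀ ℕ) : ∃ Q ∈ Λ ⊓ monSpan (fun m => m 4 ≠ 0), Q ≠ 0 ∧ coeff μ Q = 0 :=
    Submodule.exists_mem_ne_zero_apply_eq_zero h (lcoeff ℂ μ)
  have hE {Q : Quin} (hQ : Q ∈ Λ ⊓ monSpan fun m => m 4 ≠ 0) {m : Fin 5 →₀ ℕ} (hm : m 4 = 0) :
      coeff m Q = 0 :=
    coeff_eq_zero_of_mem_monSpan hQ.2 (not_not.mpr hm)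
  rcases (by omega : (m1 4 = 0 ∧ m2 4 = 0) ∨ (m1 4 = 0 ∧ m3 4 = 0) ∨ (m2 4 = 0 ∧ m3 4 = 0))
    with ⟨e1, e2⟩ | ⟨e1, e2⟩ | ⟨e1, e2⟩
  · obtain ⟨Q, hQ, hQ0, hQμ⟩ := hker m3
    exact hQ0 (hsep Q hQ.1 (hE hQ e1) (hE hQ e2) hQμ)
  · obtain ⟨Q, hQ, hQ0, hQμ⟩ := hker m2
    exact hQ0 (hsep Q hQ.1 (hE hQ e1) hQμ (hE hQ e2))
  · obtain ⟨Q, hQ, hQ0, hQμ⟩ := hker m1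
    exact hQ0 (hsep Q hQ.1 hQμ (hE hQ e1) (hE hQ e2))

theorem exists_coeff_injOn_of_finrank_le_one {W : Submodule ℂ Quin} [FiniteDimensional ℂ W]
    (hWD : W ≤ monSpan fun m => m 4 ≠ 0) (hW : finrank ℂ W ≤ 1) (hX : (X 4 ^ 2 : Quin) ∉ W) :
    ∃ μ : Fin 5 →₀ ℕ, QuadMon μ ∧ μ 4 = 1 ∧ ∀ Q ∈ W, coeff μ Q = 0 → Q = 0 := by
  rcases Nat.le_one_iff_eq_zero_or_eq_one.mp hW with h0 | h1
  · refine ⟨Finsupp.single 0 1 + Finsupp.single 4 1, by simp [quadMon_iff], by simp,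
      fun Q hQ _ => ?_⟩
    rwa [Submodule.finrank_eq_zero.mp h0, Submodule.mem_bot] at hQ
  obtain ⟨R, hR0, hR⟩ := finrank_eq_one_iff'.mp h1
  have hR0' : (R : Quin) ≠ 0 := fun h => hR0 (Subtype.ext h)
  obtain ⟨μ, hμR, hμ⟩ : ∃ μ ∈ (R : Quin).support, μ ≠ Finsupp.single 4 2 := by
    by_contra! h
    have hspan : (R : Quin) ∈ restrictSupport ℂ {Finsupp.single 4 2} := h
    rw [restrictSupport_eq_span, Set.image_singleton, ← X_pow_eq_monomial] at hspan
    obtain ⟨c, hc⟩ := Submodule.mem_span_singleton.mp hspan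
    have hc0 : c ≠ 0 := by rintro rfl; exact hR0' (by rw [← hc, zero_smul])
    apply hX
    rw [← inv_smul_smul₀ hc0 (X 4 ^ 2 : Quin), hc]
    exact W.smul_mem _ R.2
  obtain ⟨hμq, hμ4⟩ := mem_monSpan_iff.mp (hWD R.2) μ hμR
  refine ⟨μ, hμq, ?_, fun Q hQ hQμ => ?_⟩
  · have h2 : μ 4 ≠ 2 := fun h => hμ (hμq.eq_single_of_apply_eq_two h)
    have := (quadMon_iff μ).mp hμq
    omega
  · obtain ⟨c, hc⟩ := hR ⟨Q, hQ⟩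
    have hQ : Q = c • (R : Quin) := congrArg Subtype.val hc.symm
    rw [hQ, coeff_smul, smul_eq_mul, mul_eq_zero] at hQμ
    rw [hQ, hQμ.resolve_right (mem_support_iff.mp hμR), zero_smul]

theorem exists_separating_triple {Λ : Submodule ℂ Quin} (hΛ : IsNet Λ) {μ : Fin 5 →₀ ℕ}
    (hμq : QuadMon μ) (hμ : μ 4 = 1)
    (hsep : ∀ Q ∈ Λ ⊓ monSpan (fun m => m 4 ≠ 0), coeff μ Q = 0 → Q = 0) :
    ∃ m1 m2 m3 : Fin 5 →₀ ℕ, m1 ≠ m2 ∧ m1 ≠ m3 ∧ m2 ≠ m3 ∧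
      QuadMon m1 ∧ QuadMon m2 ∧ QuadMon m3 ∧ m1 4 + m2 4 + m3 4 ≤ 1 ∧
      ∀ Q ∈ Λ, coeff m1 Q = 0 → coeff m2 Q = 0 → coeff m3 Q = 0 → Q = 0 := by
  have : FiniteDimensional ℂ Λ := Module.finite_of_finrank_pos (by rw [hΛ.1]; norm_num)
  let ι := {m : Fin 5 →₀ ℕ // QuadMon m ∧ (m 4 = 0 ∨ m = μ)}
  let f (m : ι) : Dual ℂ Λ := (lcoeff ℂ m.1).comp Λ.subtype
  have hf (Q : Λ) (hQ : ∀ m, f m Q = 0) : Q = 0 := by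
    have hD : (Q : Quin) ∈ monSpan fun m => m 4 ≠ 0 :=
      mem_monSpan_of_coeff_eq_zero (hΛ.2 Q Q.2) fun m hq h4 => hQ ⟨m, hq, .inl (not_not.mp h4)⟩
    exact Subtype.ext (hsep Q ⟨Q.2, hD⟩ (hQ ⟨μ, hμq, .inr rfl⟩))
  obtain ⟨g, hg, hgsep⟩ := exists_injective_forall_apply_eq_zero_imp hΛ.1 f hf
  have hval : Function.Injective fun k => (g k).1 := Subtype.val_injective.comp hg
  have hle (k : Fin 3) : (g k).1 4 ≤ 1 := by
    rcases (g k).2.2 with h | h <;> simp [h, hμ]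
  have hzero {i j : Fin 3} (hij : i ≠ j) : (g i).1 4 = 0 ∨ (g j).1 4 = 0 := by
    rcases (g i).2.2 with hi | hi
    · exact .inl hi
    rcases (g j).2.2 with hj | hj
    · exact .inr hj
    exact absurd (hg (Subtype.ext (hi.trans hj.symm))) hij
  refine ⟨(g 0).1, (g 1).1, (g 2).1, hval.ne (by decide), hval.ne (by decide),
    hval.ne (by decide), (g 0).2.1, (g 1).2.1, (g 2).2.1, ?_, fun Q hQ h0 h1 h2 => ?_⟩
  · have := hzero (i := 0) (j := 1) (by decide)
    have := hzero (i := 0) (j := 2) (by decide)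
    have := hzero (i := 1) (j := 2) (by decide)
    have := hle 0
    have := hle 1
    have := hle 2
    omega
  · refine congrArg Subtype.val (hgsep ⟨Q, hQ⟩ fun k => ?_)
    fin_cases k <;> assumption

/-- Characterization of `ρ1`-unstable nets, `ρ1 = (1,1,1,1,-4)`:
either a pencil of the net is divisible by `e` (contains the hyperplane `e = 0`),
or `e² ∈ Λ` (an element of the net is singular along that hyperplane). -/
theorem rho1_unstable_iff (Λ : Submodule ℂ Quin) (hΛ : IsNet Λ) :
    ¬ SemistableWrt Λ (rho 0) ↔
      (2 ≤ Module.finrank ℂ ↥(Λ ⊓ monSpan fun m => m 4 ≠ 0) ∨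
        (MvPolynomial.X 4 ^ 2 : Quin) ∈ Λ) := by
  have : FiniteDimensional ℂ Λ := Module.finite_of_finrank_pos (by rw [hΛ.1]; norm_num)
  rw [semistableWrt_rho_zero_iff hΛ.1, not_iff_comm, not_or, not_le, Nat.lt_succ_iff]
  constructor
  · rintro ⟨hK, hX⟩
    obtain ⟨μ, hμq, hμ, hsep⟩ :=
      exists_coeff_injOn_of_finrank_le_one inf_le_right hK fun h => hX h.1
    exact exists_separating_triple hΛ hμq hμ hsep
  · rintro ⟨m1, m2, m3, -, -, -, -, -, -, hsum, hsep⟩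
    refine ⟨finrank_inf_monSpan_le_one hsum hsep, fun hX => ?_⟩
    refine pow_ne_zero 2 (X_ne_zero 4) (hsep _ hX ?_ ?_ ?_) <;>
      exact coeff_X_pow_eq_zero_of_lt (by omega)
end

section
/- A net of quadrics Λ in the variables a,b,c,d,e is ρ4-unstable, where ρ4=(4,-1,-1,-1,-1), if and only if Λ ⊆ (b,c,d,e) (no element of Λ has an a² term, i.e. every element of the net vanishes at the point O=[1:0:0:0:0]) and dim(Λ ∩ (b,c,d,e)²) ≥ 2 (a pencil of Λ is singular at O). -/
open MvPolynomial

/-- `(b,c,d,e)`: span of the quadratic monomials divisible by `b`, `c`, `d` or `e`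
(all quadratic monomials except `a²`). -/
noncomputable def idealBCDE : Submodule ℂ Quin :=
  monSpan fun m => m 1 ≠ 0 ∨ m 2 ≠ 0 ∨ m 3 ≠ 0 ∨ m 4 ≠ 0

/-- `(b,c,d,e)²`: span of the quadratic monomials not involving `a`. -/
noncomputable def sqBCDE : Submodule ℂ Quin := monSpan fun m => m 0 = 0

/-!
Every quadratic monomial of `a`-degree `k` has `ρ4`-weight `5k - 2`, so three monomials are
admissible exactly when their `a`-degrees add up to at least `2`.

If some form of `Λ` has an `a²` term, or `Λ` meets `(b,c,d,e)²` in at most a line, there are two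
monomials (`a²` and an arbitrary one, resp. two monomials divisible by `a`) whose coefficients cut
`Λ` down to a line and whose weights leave room for any third monomial; a monomial occurring in a
generator of that line completes them to a triple with bijective coefficient map.

Conversely, if `Λ ⊆ (b,c,d,e)` then `a²` has coefficient zero on `Λ` and cannot occur, so the three
monomials have `a`-degree at most `1` and at most one of them avoids `a`. The other two vanish on
the pencil `Λ ∩ (b,c,d,e)²`, which the remaining one cuts down to a nonzero subspace lying in the
kernel of the coefficient map.
-/

open Module

section
variable {K V : Type*} [Field K] [AddCommGroup V] [Module K V]

theorem Submodule.finrank_le_finrank_inf_ker_add_one (p : Submodule K V) [FiniteDimensional K p]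
    (f : V →ₗ[K] K) : finrank K p ≤ finrank K ↥(p ⊓ LinearMap.ker f) + 1 := by
  have hker : finrank K ↥(LinearMap.ker (f.domRestrict p)) = finrank K ↥(p ⊓ LinearMap.ker f) := by
    rw [LinearMap.ker_domRestrict, ← Submodule.map_comap_subtype, Submodule.finrank_map_subtype_eq]
  have hrange : finrank K ↥(LinearMap.range (f.domRestrict p)) ≤ 1 :=
    (Submodule.finrank_le _).trans_eq (finrank_self K)
  have := (f.domRestrict p).finrank_range_add_finrank_ker
  omega

theorem Submodule.finrank_inf_ker_lt {p : Submodule K V} [FiniteDimensional K p]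
    {f : V →ₗ[K] K} {v : V} (hv : v ∈ p) (hfv : f v ≠ 0) :
    finrank K ↥(p ⊓ LinearMap.ker f) < finrank K p :=
  Submodule.finrank_lt_finrank_of_lt
    (SetLike.lt_iff_le_and_exists.mpr ⟨inf_le_left, v, hv, fun h => hfv h.2⟩)

end

noncomputable abbrev coeffKer (m : Fin 5 →₀ ℕ) : Submodule ℂ Quin := LinearMap.ker (lcoeff ℂ m)

namespace QuadMon

variable {m : Fin 5 →₀ ℕ}

theorem of_coeff_ne_zero_s6 {Q : Quin} (hQ : Q.IsHomogeneous 2) (h : coeff m Q ≠ 0) :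
    QuadMon m :=
  not_not.mp fun hm => h (hQ.coeff_eq_zero hm)

theorem sum_apply (hm : QuadMon m) : m 0 + m 1 + m 2 + m 3 + m 4 = 2 := by
  rw [QuadMon, Finsupp.sum_fintype _ _ fun _ => rfl, Fin.sum_univ_five] at hm
  exact hm

theorem eq_single_of_two_le (hm : QuadMon m) (h : 2 ≤ m 0) : m = Finsupp.single 0 2 := by
  have := hm.sum_apply
  ext i
  fin_cases i <;> simp <;> omega

theorem wt_rho_three (hm : QuadMon m) : wt (rho 3) m = 5 * m 0 - 2 := by
  have := hm.sum_apply
  simp only [wt, rho, Fin.sum_univ_five, Matrix.cons_val, Matrix.cons_val_zero,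
    Matrix.cons_val_one, mul_neg, mul_one]
  omega

end QuadMon

section monSpan

variable {P : (Fin 5 →₀ ℕ) → Prop}

theorem monSpan_le_coeffKer {m : Fin 5 →₀ ℕ} (hm : ¬ P m) : monSpan P ≤ coeffKer m := by
  rw [monSpan, Submodule.span_le]
  rintro _ ⟨m', -, hm', rfl⟩
  simp [coeff_monomial, show m' ≠ m by rintro rfl; exact hm hm']

theorem monSpan_false : monSpan (fun _ => False) = ⊥ := by
  simp [monSpan]

theorem exists_coeff_ne_zero_of_notMem_monSpan {Q : Quin} (hQ : Q.IsHomogeneous 2)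
    (h : Q ∉ monSpan P) : ∃ m, QuadMon m ∧ ¬ P m ∧ coeff m Q ≠ 0 := by
  contrapose! h
  rw [← Q.support_sum_monomial_coeff]
  refine Submodule.sum_mem _ fun m hm => ?_
  have hc := mem_support_iff.mp hm
  rw [← mul_one (coeff m Q), ← smul_eq_mul, ← smul_monomial]
  refine Submodule.smul_mem _ _ (Submodule.subset_span ⟨m, .of_coeff_ne_zero hQ hc, ?_, rfl⟩)
  by_contra hP
  exact hc (h m (.of_coeff_ne_zero hQ hc) hP)

theorem exists_finrank_inf_coeffKer_lt {p : Submodule ℂ Quin} [FiniteDimensional ℂ p]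
    (h : ¬ p ≤ monSpan P) (hp : ∀ Q ∈ p, Q.IsHomogeneous 2) :
    ∃ m, QuadMon m ∧ ¬ P m ∧ finrank ℂ ↥(p ⊓ coeffKer m) < finrank ℂ p := by
  obtain ⟨Q, hQp, hQ⟩ := SetLike.not_le_iff_exists.mp h
  obtain ⟨m, hm, hPm, hc⟩ := exists_coeff_ne_zero_of_notMem_monSpan (hp Q hQp) hQ
  exact ⟨m, hm, hPm, Submodule.finrank_inf_ker_lt hQp hc⟩

end monSpan

/-- Truncated subtraction: `1 - m 0` is `1` if `m` does not involve `a`, and `0` otherwise. -/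
theorem finrank_le_finrank_inf_coeffKer_add (p : Submodule ℂ Quin) [FiniteDimensional ℂ p]
    (hp : p ≤ sqBCDE) (m : Fin 5 →₀ ℕ) :
    finrank ℂ p ≤ finrank ℂ ↥(p ⊓ coeffKer m) + (1 - m 0) := by
  by_cases hm : m 0 = 0
  · simpa [hm] using p.finrank_le_finrank_inf_ker_add_one (lcoeff ℂ m)
  · rw [inf_eq_left.mpr (hp.trans (monSpan_le_coeffKer hm))]
    omega

theorem bijective_coeff_triple_iff {Λ : Submodule ℂ Quin} (hΛ : finrank ℂ Λ = 3)
    (m1 m2 m3 : Fin 5 →₀ ℕ) :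
    Function.Bijective (fun Q : Λ =>
      (![coeff m1 (Q : Quin), coeff m2 (Q : Quin), coeff m3 (Q : Quin)] : Fin 3 → ℂ)) ↔
      Λ ⊓ coeffKer m1 ⊓ coeffKer m2 ⊓ coeffKer m3 = ⊥ := by
  have : FiniteDimensional ℂ Λ := Module.finite_of_finrank_eq_succ hΛ
  let L : Λ →ₗ[ℂ] Fin 3 → ℂ := LinearMap.pi ![(lcoeff ℂ m1).comp Λ.subtype,
    (lcoeff ℂ m2).comp Λ.subtype, (lcoeff ℂ m3).comp Λ.subtype]
  have hL : (fun Q : Λ =>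
      (![coeff m1 (Q : Quin), coeff m2 (Q : Quin), coeff m3 (Q : Quin)] : Fin 3 → ℂ)) = L := by
    funext Q i
    fin_cases i <;> rfl
  have hrank : finrank ℂ Λ = finrank ℂ (Fin 3 → ℂ) := by simp [hΛ]
  rw [hL, Function.Bijective,
    and_iff_left_of_imp (LinearMap.injective_iff_surjective_of_finrank_eq_finrank hrank).mp,
    injective_iff_map_eq_zero, Submodule.eq_bot_iff]
  simp [L, funext_iff, Fin.forall_fin_succ]

theorem exists_quadMon_finrank_inf_coeffKer_lt (p : Submodule ℂ Quin) [FiniteDimensional ℂ p]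
    (h : 0 < finrank ℂ p) (hp : ∀ Q ∈ p, Q.IsHomogeneous 2) :
    ∃ m, QuadMon m ∧ finrank ℂ ↥(p ⊓ coeffKer m) < finrank ℂ p := by
  have hne : ¬ p ≤ monSpan fun _ => False := by
    rw [monSpan_false, le_bot_iff, ← Submodule.finrank_eq_zero]
    exact h.ne'
  obtain ⟨m, hm, -, hlt⟩ := exists_finrank_inf_coeffKer_lt hne hp
  exact ⟨m, hm, hlt⟩

theorem semistableWrt_of_finrank_inf_coeffKer_le_one {Λ : Submodule ℂ Quin} (hΛ : IsNet Λ)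
    {ρ : Fin 5 → ℤ} {m1 m2 : Fin 5 →₀ ℕ} (hq1 : QuadMon m1) (hq2 : QuadMon m2)
    (hw : ∀ m, QuadMon m → 0 ≤ wt ρ m1 + wt ρ m2 + wt ρ m)
    (h : finrank ℂ ↥(Λ ⊓ coeffKer m1 ⊓ coeffKer m2) ≤ 1) : SemistableWrt Λ ρ := by
  obtain ⟨hdim, hhom⟩ := hΛ
  have : FiniteDimensional ℂ Λ := Module.finite_of_finrank_eq_succ hdim
  have h1 : finrank ℂ Λ ≤ finrank ℂ ↥(Λ ⊓ coeffKer m1) + 1 :=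
    Λ.finrank_le_finrank_inf_ker_add_one _
  have h2 : finrank ℂ ↥(Λ ⊓ coeffKer m1) ≤ finrank ℂ ↥(Λ ⊓ coeffKer m1 ⊓ coeffKer m2) + 1 :=
    Submodule.finrank_le_finrank_inf_ker_add_one _ _
  obtain ⟨m3, hq3, hlt⟩ :=
    exists_quadMon_finrank_inf_coeffKer_lt (Λ ⊓ coeffKer m1 ⊓ coeffKer m2) (by omega)
    fun Q hQ => hhom Q (Submodule.mem_inf.mp (Submodule.mem_inf.mp hQ).1).1
  have hm12 : m1 ≠ m2 := by
    rintro rfl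
    rw [inf_assoc, inf_idem] at h
    omega
  have hm13 : m1 ≠ m3 := by
    rintro rfl
    rw [inf_eq_left.mpr (inf_le_left.trans inf_le_right)] at hlt
    exact hlt.false
  have hm23 : m2 ≠ m3 := by
    rintro rfl
    rw [inf_eq_left.mpr inf_le_right] at hlt
    exact hlt.false
  refine ⟨m1, m2, m3, hm12, hm13, hm23, hq1, hq2, hq3, hw m3 hq3,
    (bijective_coeff_triple_iff hdim _ _ _).mpr ?_⟩
  exact Submodule.finrank_eq_zero.mp (by omega)

theorem semistableWrt_rho_three_of_not_le_idealBCDE {Λ : Submodule ℂ Quin} (hΛ : IsNet Λ)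
    (h : ¬ Λ ≤ idealBCDE) : SemistableWrt Λ (rho 3) := by
  have hdim := hΛ.1
  have : FiniteDimensional ℂ Λ := Module.finite_of_finrank_eq_succ hdim
  obtain ⟨m1, hq1, hm1, hlt1⟩ := exists_finrank_inf_coeffKer_lt h hΛ.2
  have ha2 : m1 = Finsupp.single 0 2 := hq1.eq_single_of_two_le (by have := hq1.sum_apply; omega)
  have h1 : finrank ℂ Λ ≤ finrank ℂ ↥(Λ ⊓ coeffKer m1) + 1 :=
    Λ.finrank_le_finrank_inf_ker_add_one _
  obtain ⟨m2, hq2, hlt2⟩ := exists_quadMon_finrank_inf_coeffKer_lt (Λ ⊓ coeffKer m1) (by omega)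
    fun Q hQ => hΛ.2 Q (Submodule.mem_inf.mp hQ).1
  refine semistableWrt_of_finrank_inf_coeffKer_le_one hΛ hq1 hq2 (fun m hm => ?_) (by omega)
  rw [hq1.wt_rho_three, hq2.wt_rho_three, hm.wt_rho_three, ha2, Finsupp.single_eq_same]
  omega

theorem semistableWrt_rho_three_of_finrank_inf_sqBCDE_le_one {Λ : Submodule ℂ Quin}
    (hΛ : IsNet Λ) (h : finrank ℂ ↥(Λ ⊓ sqBCDE) ≤ 1) : SemistableWrt Λ (rho 3) := by
  have hdim := hΛ.1
  have : FiniteDimensional ℂ Λ := Module.finite_of_finrank_eq_succ hdim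
  have hΛsq : ¬ Λ ≤ sqBCDE := fun hle => by
    rw [inf_eq_left.mpr hle, hdim] at h
    omega
  obtain ⟨m1, hq1, hm1, hlt1⟩ := exists_finrank_inf_coeffKer_lt hΛsq hΛ.2
  have h1 : finrank ℂ Λ ≤ finrank ℂ ↥(Λ ⊓ coeffKer m1) + 1 :=
    Λ.finrank_le_finrank_inf_ker_add_one _
  have hsq : ¬ Λ ⊓ coeffKer m1 ≤ sqBCDE := fun hle => by
    have := Submodule.finrank_mono (le_inf inf_le_left hle)
    omega
  obtain ⟨m2, hq2, hm2, hlt2⟩ :=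
    exists_finrank_inf_coeffKer_lt hsq fun Q hQ => hΛ.2 Q (Submodule.mem_inf.mp hQ).1
  refine semistableWrt_of_finrank_inf_coeffKer_le_one hΛ hq1 hq2 (fun m hm => ?_) (by omega)
  rw [hq1.wt_rho_three, hq2.wt_rho_three, hm.wt_rho_three]
  omega

theorem not_semistableWrt_rho_three {Λ : Submodule ℂ Quin} (hΛ : finrank ℂ Λ = 3)
    (hle : Λ ≤ idealBCDE) (h2 : 2 ≤ finrank ℂ ↥(Λ ⊓ sqBCDE)) : ¬ SemistableWrt Λ (rho 3) := by
  rintro ⟨m1, m2, m3, -, -, -, hq1, hq2, hq3, hw, hbij⟩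
  have : FiniteDimensional ℂ Λ := Module.finite_of_finrank_eq_succ hΛ
  obtain ⟨Q, hQ⟩ := hbij.2 ![1, 1, 1]
  have hlow : ∀ m, QuadMon m → coeff m (Q : Quin) = 1 → m 0 ≤ 1 := fun m hm hQm => by
    by_contra hm0
    have ha2 : coeff (Finsupp.single 0 2) (Q : Quin) = 0 :=
      monSpan_le_coeffKer (by simp) (hle Q.2)
    rw [← hm.eq_single_of_two_le (by omega), hQm] at ha2
    exact one_ne_zero ha2
  have := hlow m1 hq1 (congrFun hQ 0)
  have := hlow m2 hq2 (congrFun hQ 1)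
  have := hlow m3 hq3 (congrFun hQ 2)
  rw [hq1.wt_rho_three, hq2.wt_rho_three, hq3.wt_rho_three] at hw
  set p := Λ ⊓ sqBCDE
  have hp : p ≤ sqBCDE := inf_le_right
  have c1 := finrank_le_finrank_inf_coeffKer_add p hp m1
  have c2 := finrank_le_finrank_inf_coeffKer_add (p ⊓ coeffKer m1) (inf_le_left.trans hp) m2
  have c3 := finrank_le_finrank_inf_coeffKer_add (p ⊓ coeffKer m1 ⊓ coeffKer m2)
    (inf_le_left.trans (inf_le_left.trans hp)) m3
  have c4 : p ⊓ coeffKer m1 ⊓ coeffKer m2 ⊓ coeffKer m3 = ⊥ := by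
    rw [eq_bot_iff, ← (bijective_coeff_triple_iff hΛ _ _ _).mp hbij]
    gcongr
    exact inf_le_left
  rw [c4, finrank_bot] at c3
  omega

/-- Characterization of `ρ4`-unstable nets, `ρ4 = (4,-1,-1,-1,-1)`:
the net contains the point `O = [1:0:0:0:0]` and a pencil of the net is singular at `O`. -/
theorem rho4_unstable_iff (Λ : Submodule ℂ Quin) (hΛ : IsNet Λ) :
    ¬ SemistableWrt Λ (rho 3) ↔
      (Λ ≤ idealBCDE ∧ 2 ≤ Module.finrank ℂ ↥(Λ ⊓ sqBCDE)) := by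
  refine ⟨fun hns => ⟨?_, ?_⟩, fun ⟨hle, h2⟩ => not_semistableWrt_rho_three hΛ.1 hle h2⟩
  · by_contra h
    exact hns (semistableWrt_rho_three_of_not_le_idealBCDE hΛ h)
  · by_contra h
    exact hns (semistableWrt_rho_three_of_finrank_inf_sqBCDE_le_one hΛ (by omega))
end

section
/- Let A and B be symmetric 5×5 complex matrices, with rank(A)=4, and let v ∈ ℂ⁵ be a nonzero vector spanning the kernel of A. Then the polynomial t ↦ det(A+tB) is divisible by t² (equivalently, it has a root of multiplicity at least two at t=0 or is identically zero) if and only if vᵀBv = 0, i.e. the quadric defined by B passes through the vertex of the quadric defined by A. -/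
open MvPolynomial

/-! The constant term of `det (A + t B)` is `det A = 0`, and by Jacobi's formula its linear
coefficient is `tr (adj A · B)`. The columns of `adj A` lie in `ker A = ℂ v` because
`A · adj A = (det A) I = 0`, and `adj A` is symmetric, so `adj A = c · v vᵀ`. Here `c ≠ 0`: for
`v j ≠ 0`, the matrix obtained from `A` by replacing row `j` with `e_j` is injective, since
`vᵀ A = 0` forces any vector in its kernel into `ker A`. Hence the linear coefficient is
`c · vᵀ B v`. -/

open Polynomial

theorem Polynomial.X_sq_dvd_iff {R : Type*} [Semiring R] {p : R[X]} :
    X ^ 2 ∣ p ↔ p.coeff 0 = 0 ∧ p.coeff 1 = 0 := by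
  rw [X_pow_dvd_iff]
  refine ⟨fun h => ⟨h 0 two_pos, h 1 one_lt_two⟩, fun ⟨h0, h1⟩ d hd => ?_⟩
  interval_cases d <;> assumption

namespace Matrix

section CommRing

variable {n R : Type*} [Fintype n] [DecidableEq n] [CommRing R]

theorem coeff_det_add_X_smul_zero (A B : Matrix n n R) :
    (A.map Polynomial.C + (X : R[X]) • B.map Polynomial.C).det.coeff 0 = A.det := by
  rw [coeff_zero_eq_eval_zero, eval_det_add_X_smul, ← coeff_zero_eq_eval_zero,
    ← RingHom.mapMatrix_apply, ← RingHom.map_det, coeff_C_zero]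

theorem det_updateCol_eq_sum_perm (A : Matrix n n R) (j : n) (b : n → R) :
    (A.updateCol j b).det =
      ∑ σ : Equiv.Perm n,
        Equiv.Perm.sign σ • ((∏ i ∈ Finset.univ.erase j, A (σ i) i) * b (σ j)) := by
  rw [det_apply]
  refine Finset.sum_congr rfl fun σ _ => ?_
  rw [← Finset.prod_erase_mul _ _ (Finset.mem_univ j), updateCol_self]
  congr 2
  exact Finset.prod_congr rfl fun i hi => updateCol_ne (Finset.ne_of_mem_erase hi)

/-- Jacobi's formula for the derivative of `det (A + t B)` at `t = 0`. -/
theorem coeff_det_add_X_smul_one (A B : Matrix n n R) :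
    (A.map Polynomial.C + (X : R[X]) • B.map Polynomial.C).det.coeff 1 =
      (A.adjugate * B).trace := by
  calc (A.map Polynomial.C + (X : R[X]) • B.map Polynomial.C).det.coeff 1
      = (derivative (A.map Polynomial.C + (X : R[X]) • B.map Polynomial.C).det).eval 0 := by
        rw [← coeff_zero_eq_eval_zero, coeff_derivative]
        simp
    _ = ∑ j, (A.updateCol j fun k => B k j).det := by
        simp only [det_updateCol_eq_sum_perm]
        rw [Finset.sum_comm, det_apply, derivative_sum, eval_finsetSum]
        refine Finset.sum_congr rfl fun σ _ => ?_
        rw [← Finset.smul_sum]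
        simp [derivative_prod_finset, eval_finsetSum, Polynomial.eval_prod, Units.smul_def]
    _ = (A.adjugate * B).trace := by
        refine Finset.sum_congr rfl fun j _ => ?_
        rw [← cramer_apply, cramer_eq_adjugate_mulVec]
        rfl

end CommRing

section Field

variable {n K : Type*} [Fintype n] [Field K]

theorem ker_mulVecLin_eq_span_singleton {A : Matrix n n K} (hrk : A.rank + 1 = Fintype.card n)
    {v : n → K} (hv : v ≠ 0) (hAv : A *ᵥ v = 0) : LinearMap.ker A.mulVecLin = K ∙ v := by
  have hfinrank : Module.finrank K (LinearMap.ker A.mulVecLin) = 1 := by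
    have := LinearMap.finrank_range_add_finrank_ker A.mulVecLin
    rw [Module.finrank_fintype_fun_eq_card] at this
    exact Nat.add_left_cancel (this.trans hrk.symm)
  refine (Submodule.eq_of_le_of_finrank_eq ?_ ?_).symm
  · exact (Submodule.span_singleton_le_iff_mem _ _).mpr hAv
  · rw [hfinrank, finrank_span_singleton hv]

theorem mulVec_eq_zero_of_ker_eq_span {A : Matrix n n K} {v : n → K}
    (hker : LinearMap.ker A.mulVecLin = K ∙ v) : A *ᵥ v = 0 :=
  LinearMap.mem_ker.mp (hker ▸ Submodule.mem_span_singleton_self v)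

variable [DecidableEq n] {A : Matrix n n K} {v : n → K}

theorem det_updateRow_single_self_ne_zero (hA : A.IsSymm)
    (hker : LinearMap.ker A.mulVecLin = K ∙ v) {j : n} (hj : v j ≠ 0) :
    (A.updateRow j (Pi.single j 1)).det ≠ 0 := by
  intro hdet
  obtain ⟨u, hu, hMu⟩ := exists_mulVec_eq_zero_iff.mpr hdet
  have huj : u j = 0 := by simpa [mulVec] using congrFun hMu j
  have hAu_single : A *ᵥ u = Pi.single j ((A *ᵥ u) j) := by
    ext k
    by_cases hk : k = j
    · subst hk; simp
    · simpa [hk, mulVec] using congrFun hMu k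
  have hAu : A *ᵥ u = 0 := by
    have hvA : v ᵥ* A = 0 := by rw [← hA, vecMul_transpose, mulVec_eq_zero_of_ker_eq_span hker]
    have : v j * (A *ᵥ u) j = 0 := by
      rw [← dotProduct_single, ← hAu_single, dotProduct_mulVec, hvA, zero_dotProduct]
    rw [hAu_single, mul_eq_zero_iff_left hj |>.mp this, Pi.single_zero]
  obtain ⟨c, rfl⟩ := Submodule.mem_span_singleton.mp (hker ▸ LinearMap.mem_ker.mpr hAu)
  have hc : c = 0 := by simpa [hj] using huj
  exact hu (by simp [hc])

theorem exists_adjugate_eq_smul_vecMulVec (hA : A.IsSymm)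
    (hker : LinearMap.ker A.mulVecLin = K ∙ v) (hv : v ≠ 0) :
    ∃ c : K, c ≠ 0 ∧ A.adjugate = c • vecMulVec v v := by
  obtain ⟨j, hj⟩ : ∃ j, v j ≠ 0 := Function.ne_iff.mp hv
  have hdet : A.det = 0 :=
    exists_mulVec_eq_zero_iff.mp ⟨v, hv, mulVec_eq_zero_of_ker_eq_span hker⟩
  have hcol : ∀ l, ∃ r : K, r • v = fun k => A.adjugate k l := fun l => by
    refine Submodule.mem_span_singleton.mp (hker ▸ LinearMap.mem_ker.mpr ?_)
    ext k
    simpa [hdet, mul_apply, mulVec, dotProduct] using congrFun (congrFun (mul_adjugate A) k) l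
  choose r hr using hcol
  have hadj : ∀ k l, A.adjugate k l = r l * v k := fun k l => (congrFun (hr l) k).symm
  have hsymm : ∀ k l, A.adjugate k l = A.adjugate l k := fun k l => by
    rw [← transpose_apply A.adjugate, adjugate_transpose, hA]
  have hr_eq : ∀ l, r l = r j / v j * v l := fun l => by
    rw [div_mul_eq_mul_div, eq_div_iff hj, ← hadj, hsymm, hadj]
  refine ⟨r j / v j, ?_, ?_⟩
  · have := det_updateRow_single_self_ne_zero hA hker hj
    rw [← adjugate_apply, hadj] at this
    exact div_ne_zero (left_ne_zero_of_mul this) hj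
  · ext k l
    rw [hadj, hr_eq, smul_apply, vecMulVec_apply, smul_eq_mul]
    ring

theorem trace_adjugate_mul_eq_zero_iff (hA : A.IsSymm)
    (hker : LinearMap.ker A.mulVecLin = K ∙ v) (hv : v ≠ 0) (B : Matrix n n K) :
    (A.adjugate * B).trace = 0 ↔ v ⬝ᵥ (B *ᵥ v) = 0 := by
  obtain ⟨c, hc, hadj⟩ := exists_adjugate_eq_smul_vecMulVec hA hker hv
  rw [hadj, smul_mul, trace_smul, vecMulVec_mul, trace_vecMulVec, smul_eq_mul,
    mul_eq_zero_iff_left hc, dotProduct_comm, ← dotProduct_mulVec]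

end Field

end Matrix

theorem det_pencil_doubleRoot_iff_general (A B : Matrix (Fin 5) (Fin 5) ℂ)
    (hA : A.IsSymm) (hrk : A.rank = 4)
    (v : Fin 5 → ℂ) (hv : v ≠ 0) (hker : A.mulVec v = 0) :
    (Polynomial.X ^ 2 ∣
        (A.map Polynomial.C + (Polynomial.X : Polynomial ℂ) • B.map Polynomial.C).det) ↔
      dotProduct v (B.mulVec v) = 0 := by
  have hdet : A.det = 0 := Matrix.exists_mulVec_eq_zero_iff.mp ⟨v, hv, hker⟩
  have hspan := Matrix.ker_mulVecLin_eq_span_singleton (by simp [hrk]) hv hker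
  rw [X_sq_dvd_iff, Matrix.coeff_det_add_X_smul_zero, Matrix.coeff_det_add_X_smul_one,
    Matrix.trace_adjugate_mul_eq_zero_iff hA hspan hv, hdet]
  exact and_iff_right rfl

/-- Let `A` be a symmetric rank-4 matrix with kernel spanned by `v`, and
`B` symmetric. Then `det(A + tB)` vanishes to order at least two at `t = 0` (or is
identically zero) if and only if the quadric of `B` passes through the vertex of the
quadric of `A`, i.e. `vᵀBv = 0`. -/
theorem det_pencil_doubleRoot_iff (A B : Matrix (Fin 5) (Fin 5) ℂ)
    (hA : A.IsSymm) (hB : B.IsSymm) (hrk : A.rank = 4)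
    (v : Fin 5 → ℂ) (hv : v ≠ 0) (hker : A.mulVec v = 0) :
    (Polynomial.X ^ 2 ∣
        (A.map Polynomial.C + (Polynomial.X : Polynomial ℂ) • B.map Polynomial.C).det) ↔
      dotProduct v (B.mulVec v) = 0 :=
  det_pencil_doubleRoot_iff_general A B hA hrk v hv hker
end

section
/- Let f ∈ ℂ[x,y,z] be an irreducible quadratic form and let Q be a quadratic form in five variables a,b,c,d,e such that Q(x², xy, y², yz, z²) = f(x,y,z)² as polynomials in x,y,z (so the quadric Q cuts out on the Veronese quartic surface V = {ac−b² = ce−d² = 0} ⊂ ℙ⁴ the double of an irreducible conic). Then either (i) the coefficient of xz in f is zero, so that f is a linear combination of x², xy, y², yz, z² and the double curve is a double hyperplane section of V; or (ii) there exists g ∈ GL(5,ℂ), acting by linear substitution of a,b,c,d,e, mapping the net span(ac−b², ce−d², Q) onto the net of the balanced ribbon span(ac−b², ce−d², ae−2bd+c²). -/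
open MvPolynomial

/-- The Veronese map `ℂ[a,b,c,d,e] → ℂ[x,y,z]` given by
`a ↦ x², b ↦ xy, c ↦ y², d ↦ yz, e ↦ z²`. -/
noncomputable def veroneseSubst : Quin →ₐ[ℂ] MvPolynomial (Fin 3) ℂ :=
  MvPolynomial.aeval
    ![(MvPolynomial.X 0 : MvPolynomial (Fin 3) ℂ) ^ 2,
      MvPolynomial.X 0 * MvPolynomial.X 1,
      MvPolynomial.X 1 ^ 2,
      MvPolynomial.X 1 * MvPolynomial.X 2,
      MvPolynomial.X 2 ^ 2]

/-!
The substitutions `y ↦ 0, x ↦ ±x` agree on `x², xy, y², yz, z²`, so `f(x,0,z)² = f(-x,0,z)²`;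
when `f` has an `xz`-term this kills its `x²`- and `z²`-terms, so
`f = βxy + γy² + δyz + ζxz`, and irreducibility of `f` gives `k = βδ - γζ ≠ 0`.
The plane substitution `(x, y, z) ↦ (kx - δy, ζy, z - βy)` maps the span of
`x², xy, y², yz, z²` to itself, so it is induced by some `g ∈ GL(5)`; it sends `f` to
`kζ(xz - y²)`, whose square is the image of the ribbon quadric `ae - 2bd + c²`.
The quadrics vanishing on `V` are spanned by `ac - b²` and `ce - d²`, because among quadratic
monomials the Veronese map only identifies `ac` with `b²` and `ce` with `d²`. Hence `g` rescales
these two quadrics and sends `Q` to `(kζ)²(ae - 2bd + c²)` modulo them.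
-/

lemma Submodule.span_smul_smul_eq_of_sub_mem {K V : Type*} [Field K] [AddCommGroup V]
    [Module K V] {u v w x : V} {a b c : K} (ha : a ≠ 0) (hb : b ≠ 0) (hc : c ≠ 0)
    (hx : x - c • w ∈ span K {u, v}) : span K {a • u, b • v, x} = span K {u, v, w} := by
  have huv : span K {u, v} ≤ span K {a • u, b • v, x} := by
    refine span_le.mpr (Set.insert_subset_iff.mpr ⟨?_, Set.singleton_subset_iff.mpr ?_⟩)
    · simpa [ha] using smul_mem _ a⁻¹ (subset_span (by simp) : a • u ∈ span K {a • u, b • v, x})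
    · simpa [hb] using smul_mem _ b⁻¹ (subset_span (by simp) : b • v ∈ span K {a • u, b • v, x})
  apply le_antisymm
  · refine span_le.mpr (Set.insert_subset_iff.mpr ⟨?_, Set.insert_subset_iff.mpr ⟨?_, ?_⟩⟩)
    · exact smul_mem _ a (subset_span (by simp))
    · exact smul_mem _ b (subset_span (by simp))
    · refine Set.singleton_subset_iff.mpr ?_
      rw [← sub_add_cancel x (c • w)]
      exact add_mem (span_mono (Set.insert_subset_insert (by simp)) hx)
        (smul_mem _ c (subset_span (by simp)))
  · refine span_le.mpr (Set.insert_subset_iff.mpr ⟨huv (subset_span (by simp)),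
      Set.insert_subset_iff.mpr ⟨huv (subset_span (by simp)), Set.singleton_subset_iff.mpr ?_⟩⟩)
    rw [show w = c⁻¹ • (x - (x - c • w)) by simp [hc]]
    exact smul_mem _ _ (sub_mem (subset_span (by simp)) (huv hx))

lemma Finsupp.exists_eq_single_add_single_of_degree_eq_two {σ : Type*} {m : σ →₀ ℕ}
    (h : m.degree = 2) : ∃ i j, m = Finsupp.single i 1 + Finsupp.single j 1 := by
  classical
  have hcard : Multiset.card (Finsupp.toMultiset m) = 2 := by
    rw [Finsupp.card_toMultiset, ← h, Finsupp.degree]; rfl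
  obtain ⟨i, j, hij⟩ := Multiset.card_eq_two.mp hcard
  refine ⟨i, j, (Finsupp.toMultiset_eq_iff.mp hij).trans ?_⟩
  rw [Multiset.insert_eq_cons, ← Multiset.singleton_add, Multiset.toFinsupp_add,
    Multiset.toFinsupp_singleton, Multiset.toFinsupp_singleton]

lemma Finsupp.degree_fin_five (n : Fin 5 →₀ ℕ) : n.degree = n 0 + n 1 + n 2 + n 3 + n 4 := by
  rw [Finsupp.degree_eq_sum, Fin.sum_univ_five]

lemma MvPolynomial.X_mul_X_eq_monomial {σ R : Type*} [CommSemiring R] (i j : σ) :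
    (X i * X j : MvPolynomial σ R) = monomial (Finsupp.single i 1 + Finsupp.single j 1) 1 := by
  rw [X, X, monomial_mul, one_mul]

lemma MvPolynomial.IsHomogeneous.ext {σ R : Type*} [CommSemiring R] {p q : MvPolynomial σ R}
    {n : ℕ} (hp : p.IsHomogeneous n) (hq : q.IsHomogeneous n)
    (h : ∀ m : σ →₀ ℕ, m.degree = n → coeff m p = coeff m q) : p = q := by
  ext m
  by_cases hm : m.degree = n
  · exact h m hm
  · rw [hp.coeff_eq_zero hm, hq.coeff_eq_zero hm]

lemma MvPolynomial.IsHomogeneous.eq_quadratic_fin_three {R : Type*} [CommSemiring R]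
    {f : MvPolynomial (Fin 3) R} (hf : f.IsHomogeneous 2) :
    f = C (coeff (Finsupp.single 0 2) f) * X 0 ^ 2 +
      C (coeff (Finsupp.single 0 1 + Finsupp.single 1 1) f) * (X 0 * X 1) +
      C (coeff (Finsupp.single 1 2) f) * X 1 ^ 2 +
      C (coeff (Finsupp.single 1 1 + Finsupp.single 2 1) f) * (X 1 * X 2) +
      C (coeff (Finsupp.single 2 2) f) * X 2 ^ 2 +
      C (coeff (Finsupp.single 0 1 + Finsupp.single 2 1) f) * (X 0 * X 2) := by
  have hX2 (i : Fin 3) : (X i ^ 2 : MvPolynomial (Fin 3) R).IsHomogeneous 2 :=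
    isHomogeneous_X_pow i 2
  have hXX (i j : Fin 3) : (X i * X j : MvPolynomial (Fin 3) R).IsHomogeneous 2 :=
    (isHomogeneous_X R i).mul (isHomogeneous_X R j)
  refine hf.ext (((((((hX2 0).C_mul _).add ((hXX 0 1).C_mul _)).add ((hX2 1).C_mul _)).add
    ((hXX 1 2).C_mul _)).add ((hX2 2).C_mul _)).add ((hXX 0 2).C_mul _)) fun m hm => ?_
  obtain ⟨i, j, rfl⟩ := Finsupp.exists_eq_single_add_single_of_degree_eq_two hm
  simp only [coeff_add, coeff_C_mul, X_mul_X_eq_monomial, coeff_X_pow, coeff_monomial]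
  fin_cases i <;> fin_cases j <;>
    simp [Finsupp.ext_iff, Fin.forall_fin_succ] <;>
    congr 1 <;> ext k <;> fin_cases k <;> simp

lemma MvPolynomial.IsHomogeneous.substMap {p : Quin} {n : ℕ} (hp : p.IsHomogeneous n)
    (g : Matrix (Fin 5) (Fin 5) ℂ) : (substMap g p).IsHomogeneous n := by
  have h := hp.aeval (fun i => ∑ j, C (g i j) * X j) fun i =>
    IsHomogeneous.sum _ _ _ fun j _ => isHomogeneous_C_mul_X (g i j) j
  rw [one_mul] at h
  exact h

lemma not_isUnit_of_eval_eq_zero {σ R : Type*} [CommSemiring R] [Nontrivial R]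
    {p : MvPolynomial σ R} (v : σ → R) (h : eval v p = 0) : ¬IsUnit p :=
  fun hp => not_isUnit_zero (h ▸ hp.map (eval v))

noncomputable def veroneseExp (m : Fin 5 →₀ ℕ) : Fin 3 →₀ ℕ :=
  Finsupp.equivFunOnFinite.symm ![2 * m 0 + m 1, m 1 + 2 * m 2 + m 3, m 3 + 2 * m 4]

@[simp]
lemma veroneseExp_apply (m : Fin 5 →₀ ℕ) (i : Fin 3) :
    veroneseExp m i = ![2 * m 0 + m 1, m 1 + 2 * m 2 + m 3, m 3 + 2 * m 4] i := rfl

lemma veroneseSubst_monomial (m : Fin 5 →₀ ℕ) (c : ℂ) :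
    veroneseSubst (monomial m c) = monomial (veroneseExp m) c := by
  rw [veroneseSubst, aeval_monomial, monomial_eq, Finsupp.prod_fintype _ _ (fun _ => pow_zero _),
    Finsupp.prod_fintype _ _ (fun _ => pow_zero _), Fin.prod_univ_five, Fin.prod_univ_three]
  simp only [veroneseExp_apply, algebraMap_eq, Matrix.cons_val]
  ring

lemma coeff_veroneseSubst_of_injOn {p : Quin} {S : Set (Fin 5 →₀ ℕ)} (hp : ↑p.support ⊆ S)
    (hS : S.InjOn veroneseExp) {m : Fin 5 →₀ ℕ} (hm : m ∈ S) :
    coeff (veroneseExp m) (veroneseSubst p) = coeff m p := by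
  conv_lhs => rw [← p.support_sum_monomial_coeff, map_sum, coeff_sum]
  simp_rw [veroneseSubst_monomial, coeff_monomial]
  rw [Finset.sum_eq_single m (fun n hn hnm => if_neg fun h => hnm (hS (hp hn) hm h)),
    if_pos rfl]
  intro hm'
  rw [if_pos rfl, notMem_support_iff.mp hm']

lemma injOn_veroneseExp :
    {n : Fin 5 →₀ ℕ | n.degree = 2 ∧ n ≠ Finsupp.single 0 1 + Finsupp.single 2 1 ∧
      n ≠ Finsupp.single 2 1 + Finsupp.single 4 1}.InjOn veroneseExp := by
  have key (n : Fin 5 →₀ ℕ) (hn : n.degree = 2) (hac : n ≠ Finsupp.single 0 1 + Finsupp.single 2 1)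
      (hce : n ≠ Finsupp.single 2 1 + Finsupp.single 4 1) :
      n 0 + n 1 + n 2 + n 3 + n 4 = 2 ∧ ¬(n 0 = 1 ∧ n 2 = 1) ∧ ¬(n 2 = 1 ∧ n 4 = 1) := by
    rw [Finsupp.degree_fin_five] at hn
    refine ⟨hn, fun h => hac ?_, fun h => hce ?_⟩ <;>
      ext k <;> fin_cases k <;>
      simp only [Fin.zero_eta, Fin.mk_one, Fin.reduceFinMk, Finsupp.coe_add, Pi.add_apply,
        Finsupp.single_apply, Fin.reduceEq, ↓reduceIte] <;> omega
  rintro n ⟨hn, hn₁, hn₂⟩ m ⟨hm, hm₁, hm₂⟩ h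
  have hn' := key n hn hn₁ hn₂
  have hm' := key m hm hm₁ hm₂
  have h0 := DFunLike.congr_fun h 0
  have h1 := DFunLike.congr_fun h 1
  simp only [veroneseExp_apply, Matrix.cons_val] at h0 h1
  ext i
  fin_cases i <;> simp only [Fin.zero_eta, Fin.mk_one, Fin.reduceFinMk] <;> omega

noncomputable def quadricAC : Quin := X 0 * X 2 - X 1 ^ 2

noncomputable def quadricCE : Quin := X 2 * X 4 - X 3 ^ 2

noncomputable def ribbonQuadric : Quin := X 0 * X 4 - 2 * (X 1 * X 3) + X 2 ^ 2

lemma isHomogeneous_quadricAC : quadricAC.IsHomogeneous 2 :=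
  ((isHomogeneous_X ℂ 0).mul (isHomogeneous_X ℂ 2)).sub (isHomogeneous_X_pow 1 2)

lemma isHomogeneous_quadricCE : quadricCE.IsHomogeneous 2 :=
  ((isHomogeneous_X ℂ 2).mul (isHomogeneous_X ℂ 4)).sub (isHomogeneous_X_pow 3 2)

lemma isHomogeneous_ribbonQuadric : ribbonQuadric.IsHomogeneous 2 :=
  ((((isHomogeneous_X ℂ 0).mul (isHomogeneous_X ℂ 4)).sub
    (((isHomogeneous_X ℂ 1).mul (isHomogeneous_X ℂ 3)).C_mul 2)).add (isHomogeneous_X_pow 2 2))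

lemma veroneseSubst_quadricAC : veroneseSubst quadricAC = 0 := by
  simp only [quadricAC, veroneseSubst, map_sub, map_mul, map_pow, aeval_X, Matrix.cons_val]
  ring

lemma veroneseSubst_quadricCE : veroneseSubst quadricCE = 0 := by
  simp only [quadricCE, veroneseSubst, map_sub, map_mul, map_pow, aeval_X, Matrix.cons_val]
  ring

lemma veroneseSubst_ribbonQuadric :
    veroneseSubst ribbonQuadric = (X 0 * X 2 - X 1 ^ 2) ^ 2 := by
  simp only [ribbonQuadric, veroneseSubst, map_add, map_sub, map_mul, map_pow, map_ofNat, aeval_X,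
    Matrix.cons_val]
  ring

lemma mem_span_quadrics_of_veroneseSubst_eq_zero {R : Quin} (hR : R.IsHomogeneous 2)
    (h : veroneseSubst R = 0) : R ∈ Submodule.span ℂ {quadricAC, quadricCE} := by
  set ac : Fin 5 →₀ ℕ := Finsupp.single 0 1 + Finsupp.single 2 1
  set ce : Fin 5 →₀ ℕ := Finsupp.single 2 1 + Finsupp.single 4 1
  refine Submodule.mem_span_pair.mpr ⟨coeff ac R, coeff ce R, Eq.symm (sub_eq_zero.mp ?_)⟩
  set R' := R - (coeff ac R • quadricAC + coeff ce R • quadricCE)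
  have hR' : R'.IsHomogeneous 2 := by
    simp only [R', smul_eq_C_mul]
    exact hR.sub ((isHomogeneous_quadricAC.C_mul _).add (isHomogeneous_quadricCE.C_mul _))
  have hv : veroneseSubst R' = 0 := by
    simp only [R', map_sub, map_add, map_smul, h, veroneseSubst_quadricAC,
      veroneseSubst_quadricCE, smul_zero, add_zero, sub_zero]
  have hac : coeff ac R' = 0 := by
    simp [R', ac, quadricAC, quadricCE, X_mul_X_eq_monomial, coeff_X_pow, coeff_monomial,
      Finsupp.ext_iff, Fin.forall_fin_succ, Finsupp.single_apply]
  have hce : coeff ce R' = 0 := by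
    simp [R', ce, quadricAC, quadricCE, X_mul_X_eq_monomial, coeff_X_pow, coeff_monomial,
      Finsupp.ext_iff, Fin.forall_fin_succ, Finsupp.single_apply]
  have hsupp : ↑R'.support ⊆ {n : Fin 5 →₀ ℕ | n.degree = 2 ∧ n ≠ ac ∧ n ≠ ce} := by
    intro n hn
    have hn : coeff n R' ≠ 0 := mem_support_iff.mp hn
    exact ⟨not_not.mp fun hd => hn (hR'.coeff_eq_zero hd), fun h => hn (h ▸ hac),
      fun h => hn (h ▸ hce)⟩
  ext m
  by_contra hm
  rw [coeff_zero] at hm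
  have hmS := hsupp (mem_support_iff.mpr hm)
  rw [← coeff_veroneseSubst_of_injOn hsupp injOn_veroneseExp hmS, hv, coeff_zero] at hm
  exact hm rfl

noncomputable def conicXZ (β γ δ ζ : ℂ) : MvPolynomial (Fin 3) ℂ :=
  C β * (X 0 * X 1) + C γ * X 1 ^ 2 + C δ * (X 1 * X 2) + C ζ * (X 0 * X 2)

lemma coeff_sq_eq_zero_of_veroneseSubst_eq_sq {f : MvPolynomial (Fin 3) ℂ} {Q : Quin}
    (hf : f.IsHomogeneous 2) (hxz : coeff (Finsupp.single 0 1 + Finsupp.single 2 1) f ≠ 0)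
    (hQ : veroneseSubst Q = f ^ 2) :
    coeff (Finsupp.single 0 2) f = 0 ∧ coeff (Finsupp.single 2 2) f = 0 := by
  set α := coeff (Finsupp.single 0 2) f
  set ε := coeff (Finsupp.single 2 2) f
  set ζ := coeff (Finsupp.single 0 1 + Finsupp.single 2 1) f
  let fold (s : ℂ) : MvPolynomial (Fin 3) ℂ →ₐ[ℂ] MvPolynomial (Fin 3) ℂ :=
    aeval ![C s * X 0, 0, X 2]
  have hfold (s : ℂ) :
      fold s f = C α * C s ^ 2 * X 0 ^ 2 + C ζ * C s * (X 0 * X 2) + C ε * X 2 ^ 2 := by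
    rw [hf.eq_quadratic_fin_three]
    simp only [fold, map_add, map_mul, map_pow, aeval_X, aeval_C, algebraMap_eq, Matrix.cons_val]
    ring
  have hsq : fold 1 f ^ 2 = fold (-1) f ^ 2 := by
    rw [← map_pow, ← map_pow, ← hQ, ← AlgHom.comp_apply, ← AlgHom.comp_apply]
    congr 1
    refine algHom_ext fun i => ?_
    fin_cases i <;> simp [fold, veroneseSubst]
  have hprod : (4 : MvPolynomial (Fin 3) ℂ) *
      (C ζ * (X 0 * X 2) * (C α * X 0 ^ 2 + C ε * X 2 ^ 2)) = 0 := by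
    rw [hfold, hfold] at hsq
    simp only [map_one, map_neg] at hsq
    linear_combination hsq
  have hαε : (C α * X 0 ^ 2 + C ε * X 2 ^ 2 : MvPolynomial (Fin 3) ℂ) = 0 := by
    refine (mul_eq_zero.mp ((mul_eq_zero.mp hprod).resolve_left (by norm_num))).resolve_left ?_
    exact mul_ne_zero (C_ne_zero.mpr hxz) (mul_ne_zero (X_ne_zero _) (X_ne_zero _))
  constructor
  · simpa [coeff_X_pow, Finsupp.single_eq_single_iff] using
      congrArg (coeff (Finsupp.single 0 2)) hαε
  · simpa [coeff_X_pow, Finsupp.single_eq_single_iff] using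
      congrArg (coeff (Finsupp.single 2 2)) hαε

lemma eq_conicXZ_of_veroneseSubst_eq_sq {f : MvPolynomial (Fin 3) ℂ} {Q : Quin}
    (hf : f.IsHomogeneous 2) (hxz : coeff (Finsupp.single 0 1 + Finsupp.single 2 1) f ≠ 0)
    (hQ : veroneseSubst Q = f ^ 2) :
    f = conicXZ (coeff (Finsupp.single 0 1 + Finsupp.single 1 1) f)
      (coeff (Finsupp.single 1 2) f) (coeff (Finsupp.single 1 1 + Finsupp.single 2 1) f)
      (coeff (Finsupp.single 0 1 + Finsupp.single 2 1) f) := by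
  obtain ⟨hx2, hz2⟩ := coeff_sq_eq_zero_of_veroneseSubst_eq_sq hf hxz hQ
  conv_lhs => rw [hf.eq_quadratic_fin_three, hx2, hz2]
  simp only [conicXZ, map_zero, zero_mul, zero_add, add_zero]

lemma sub_ne_zero_of_irreducible_conicXZ {β γ δ ζ : ℂ} (hζ : ζ ≠ 0)
    (hirr : Irreducible (conicXZ β γ δ ζ)) : β * δ - γ * ζ ≠ 0 := by
  intro hk
  have hfactor : conicXZ β γ δ ζ = (X 0 + C (δ / ζ) * X 1) * (C β * X 1 + C ζ * X 2) := by
    have hγ : (C γ : MvPolynomial (Fin 3) ℂ) = C (δ / ζ) * C β := by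
      rw [← map_mul]; congr 1; field_simp; linear_combination -hk
    have hδ : (C δ : MvPolynomial (Fin 3) ℂ) = C (δ / ζ) * C ζ := by
      rw [← map_mul, div_mul_cancel₀ _ hζ]
    rw [conicXZ, hγ, hδ]
    ring
  rcases hirr.isUnit_or_isUnit hfactor with h | h
  · exact not_isUnit_of_eval_eq_zero ![-(δ / ζ), 1, 0] (by simp) h
  · exact not_isUnit_of_eval_eq_zero 0 (by simp) h

/-- The substitution of `a, …, e` induced by `x ↦ kx - δy`, `y ↦ ζy`, `z ↦ z - βy`. -/
def ribbonMatrix (β δ ζ k : ℂ) : Matrix (Fin 5) (Fin 5) ℂ :=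
  !![k ^ 2, -2 * k * δ, δ ^ 2, 0, 0;
     0, k * ζ, -δ * ζ, 0, 0;
     0, 0, ζ ^ 2, 0, 0;
     0, 0, -β * ζ, ζ, 0;
     0, 0, β ^ 2, -2 * β, 1]

noncomputable def ribbonPlaneSubst (β δ ζ k : ℂ) :
    MvPolynomial (Fin 3) ℂ →ₐ[ℂ] MvPolynomial (Fin 3) ℂ :=
  aeval ![C k * X 0 - C δ * X 1, C ζ * X 1, X 2 - C β * X 1]

lemma det_ribbonMatrix (β δ ζ k : ℂ) : (ribbonMatrix β δ ζ k).det = k ^ 3 * ζ ^ 4 := by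
  simp [ribbonMatrix, Matrix.det_succ_row_zero, Fin.sum_univ_succ]
  ring

lemma substMap_ribbonMatrix (β δ ζ k : ℂ) (p : Quin) :
    substMap (ribbonMatrix β δ ζ k) p =
      aeval ![C k ^ 2 * X 0 - 2 * C k * C δ * X 1 + C δ ^ 2 * X 2,
        C k * C ζ * X 1 - C δ * C ζ * X 2, C ζ ^ 2 * X 2, C ζ * X 3 - C β * C ζ * X 2,
        C β ^ 2 * X 2 - 2 * C β * X 3 + X 4] p := by
  rw [substMap, AlgHom.toLinearMap_apply]
  congr 2
  ext1 i
  fin_cases i <;>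
    simp only [ribbonMatrix, Fin.sum_univ_five, Matrix.of_apply, Matrix.cons_val', Matrix.cons_val,
      Matrix.cons_val_fin_one, Fin.zero_eta, Fin.mk_one, Fin.reduceFinMk, map_zero, map_one,
      map_neg, map_mul, map_pow, map_ofNat] <;> ring

lemma substMap_ribbonMatrix_quadricAC (β δ ζ k : ℂ) :
    substMap (ribbonMatrix β δ ζ k) quadricAC = (k * ζ) ^ 2 • quadricAC := by
  simp only [substMap_ribbonMatrix, quadricAC, smul_eq_C_mul, map_sub, map_mul, map_pow, aeval_X,
    Matrix.cons_val]
  ring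

lemma substMap_ribbonMatrix_quadricCE (β δ ζ k : ℂ) :
    substMap (ribbonMatrix β δ ζ k) quadricCE = ζ ^ 2 • quadricCE := by
  simp only [substMap_ribbonMatrix, quadricCE, smul_eq_C_mul, map_sub, map_mul, map_pow, aeval_X,
    Matrix.cons_val]
  ring

lemma veroneseSubst_substMap_ribbonMatrix (β δ ζ k : ℂ) (p : Quin) :
    veroneseSubst (substMap (ribbonMatrix β δ ζ k) p) =
      ribbonPlaneSubst β δ ζ k (veroneseSubst p) := by
  rw [substMap_ribbonMatrix, ← AlgHom.comp_apply, ← AlgHom.comp_apply]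
  congr 1
  refine algHom_ext fun i => ?_
  fin_cases i <;>
    simp only [veroneseSubst, ribbonPlaneSubst, AlgHom.comp_apply, map_add, map_sub, map_mul,
      map_pow, aeval_X, aeval_C, algebraMap_eq, map_ofNat, Matrix.cons_val, Fin.zero_eta,
      Fin.mk_one, Fin.reduceFinMk] <;> ring

lemma ribbonPlaneSubst_conicXZ (β γ δ ζ : ℂ) :
    ribbonPlaneSubst β δ ζ (β * δ - γ * ζ) (conicXZ β γ δ ζ) =
      C ((β * δ - γ * ζ) * ζ) * (X 0 * X 2 - X 1 ^ 2) := by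
  simp only [ribbonPlaneSubst, conicXZ, map_add, map_sub, map_mul, map_pow, aeval_X, aeval_C,
    algebraMap_eq, Matrix.cons_val]
  ring

lemma substMap_ribbonMatrix_sub_mem_span {β γ δ ζ : ℂ} {Q : Quin} (hQ : Q.IsHomogeneous 2)
    (hcomp : veroneseSubst Q = conicXZ β γ δ ζ ^ 2) :
    substMap (ribbonMatrix β δ ζ (β * δ - γ * ζ)) Q - ((β * δ - γ * ζ) * ζ) ^ 2 • ribbonQuadric ∈
      Submodule.span ℂ {quadricAC, quadricCE} := by
  refine mem_span_quadrics_of_veroneseSubst_eq_zero ((hQ.substMap _).sub ?_) ?_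
  · rw [smul_eq_C_mul]
    exact isHomogeneous_ribbonQuadric.C_mul _
  · rw [map_sub, map_smul, veroneseSubst_substMap_ribbonMatrix, hcomp, map_pow,
      ribbonPlaneSubst_conicXZ, veroneseSubst_ribbonQuadric, smul_eq_C_mul]
    simp only [map_pow, map_mul]
    ring

/-- A quadric cutting out the double of an irreducible conic on the
Veronese quartic surface either cuts a double hyperplane section (the conic `f` has no
`xz` term), or the resulting net is projectively equivalent to the balanced ribbon. -/
theorem double_conic_on_veronese (f : MvPolynomial (Fin 3) ℂ)
    (hf : f.IsHomogeneous 2) (hirr : Irreducible f)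
    (Q : Quin) (hQ : Q.IsHomogeneous 2)
    (hcomp : veroneseSubst Q = f ^ 2) :
    MvPolynomial.coeff (Finsupp.single 0 1 + Finsupp.single 2 1) f = 0 ∨
    ∃ g : Matrix.GeneralLinearGroup (Fin 5) ℂ,
      Submodule.map (substMap (g : Matrix (Fin 5) (Fin 5) ℂ))
          (Submodule.span ℂ
            {(MvPolynomial.X 0 * MvPolynomial.X 2 - MvPolynomial.X 1 ^ 2 : Quin),
             MvPolynomial.X 2 * MvPolynomial.X 4 - MvPolynomial.X 3 ^ 2, Q}) =
        Submodule.span ℂ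
          {(MvPolynomial.X 0 * MvPolynomial.X 2 - MvPolynomial.X 1 ^ 2 : Quin),
           MvPolynomial.X 2 * MvPolynomial.X 4 - MvPolynomial.X 3 ^ 2,
           MvPolynomial.X 0 * MvPolynomial.X 4 -
             2 * (MvPolynomial.X 1 * MvPolynomial.X 3) + MvPolynomial.X 2 ^ 2} := by
  by_cases hζ : coeff (Finsupp.single 0 1 + Finsupp.single 2 1) f = 0
  · exact Or.inl hζ
  right
  have hf_conic := eq_conicXZ_of_veroneseSubst_eq_sq hf hζ hcomp
  set β := coeff (Finsupp.single 0 1 + Finsupp.single 1 1) f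
  set γ := coeff (Finsupp.single 1 2) f
  set δ := coeff (Finsupp.single 1 1 + Finsupp.single 2 1) f
  set ζ := coeff (Finsupp.single 0 1 + Finsupp.single 2 1) f
  have hk : β * δ - γ * ζ ≠ 0 := sub_ne_zero_of_irreducible_conicXZ hζ (hf_conic ▸ hirr)
  have hQ' := substMap_ribbonMatrix_sub_mem_span hQ (hf_conic ▸ hcomp)
  refine ⟨.mkOfDetNeZero (ribbonMatrix β δ ζ (β * δ - γ * ζ)) ?_, ?_⟩
  · rw [det_ribbonMatrix]
    exact mul_ne_zero (pow_ne_zero _ hk) (pow_ne_zero _ hζ)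
  change Submodule.map (substMap (ribbonMatrix β δ ζ (β * δ - γ * ζ)))
    (Submodule.span ℂ {quadricAC, quadricCE, Q}) =
      Submodule.span ℂ {quadricAC, quadricCE, ribbonQuadric}
  rw [Submodule.map_span, Set.image_insert_eq, Set.image_insert_eq, Set.image_singleton,
    substMap_ribbonMatrix_quadricAC, substMap_ribbonMatrix_quadricCE]
  exact Submodule.span_smul_smul_eq_of_sub_mem (pow_ne_zero _ (mul_ne_zero hk hζ))
    (pow_ne_zero _ hζ) (pow_ne_zero _ (mul_ne_zero hk hζ)) hQ'
end
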